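/- arXiv:1811.00492 — 3 statements merged into one kernel-verified Lean document; each statement's English description precedes it below -/
import Mathlib

section
/- (Existence of stationary shock profiles.) Let u₋ ≠ u₊ and v₋ be real numbers, and let V : ℝ → ℝ be locally Lipschitz with V(u₋) = V(u₊) = v₋, and suppose (V(u) − v₋)·(u₋ − u₊) > 0 for every u strictly between u₊ and u₋. Then there exists a continuously differentiable, strictly monotone function u : ℝ → ℝ taking values strictly between u₊ and u₋, satisfying u′(ξ) = v₋ − V(u(ξ)) for all ξ ∈ ℝ, with u(ξ) → u₋ as ξ → −∞ and u(ξ) → u₊ as ξ → +∞. -/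
/-!
Separation of variables. After reflecting `x ↦ -x` if necessary, the right-hand side `F` of
`u' = F(u)` is positive between the two states, and the profile is the inverse of a primitive `φ`
of `1 / F`. Since `F` is Lipschitz and vanishes at the states, `1 / F ≥ 1 / (K |x - x_end|)` near
them, so `φ` diverges logarithmically at both ends and is an increasing bijection from the open
interval onto `ℝ`: the profile needs infinite time to reach either state.
-/

open Filter Topology Set intervalIntegral

lemma LocallyLipschitz.exists_pos_eventually_dist_le {α β : Type*} [PseudoMetricSpace α]
    [PseudoMetricSpace β] {f : α → β} (hf : LocallyLipschitz f) (x₀ : α) :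
    ∃ K : ℝ, 0 < K ∧ ∀ᶠ x in 𝓝 x₀, dist (f x) (f x₀) ≤ K * dist x x₀ := by
  obtain ⟨K, t, ht, hK⟩ := hf x₀
  refine ⟨K + 1, by positivity, ?_⟩
  filter_upwards [ht] with x hx
  calc dist (f x) (f x₀) ≤ K * dist x x₀ := hK.dist_le_mul x hx x₀ (mem_of_mem_nhds ht)
    _ ≤ (K + 1) * dist x x₀ := by gcongr; linarith

lemma hasDerivAt_integral_of_continuousOn_Ioo {E : Type*} [NormedAddCommGroup E]
    [NormedSpace ℝ E] [CompleteSpace E] {f : ℝ → E} {a b c x : ℝ}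
    (hf : ContinuousOn f (Ioo a b)) (hc : c ∈ Ioo a b) (hx : x ∈ Ioo a b) :
    HasDerivAt (fun y => ∫ t in c..y, f t) (f x) x :=
  integral_hasDerivAt_right (hf.mono (ordConnected_Ioo.uIcc_subset hc hx)).intervalIntegrable
    (hf.stronglyMeasurableAtFilter isOpen_Ioo x hx) (hf.continuousAt (Ioo_mem_nhds hx.1 hx.2))

-- `φ + K⁻¹ * log (b - x)` is monotone near `b`, while `log (b - x) → -∞`.
lemma tendsto_nhdsLT_atTop_of_inv_le_deriv {φ φ' : ℝ → ℝ} {b K : ℝ} (hK : 0 < K)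
    (h : ∀ᶠ x in 𝓝[<] b, HasDerivAt φ (φ' x) x ∧ (K * (b - x))⁻¹ ≤ φ' x) :
    Tendsto φ (𝓝[<] b) atTop := by
  obtain ⟨x₀, hx₀b, hsub⟩ := mem_nhdsLT_iff_exists_Ioo_subset.1 h
  set ψ : ℝ → ℝ := fun x => φ x + K⁻¹ * Real.log (b - x)
  have hψ : ∀ x ∈ Ioo x₀ b, HasDerivAt ψ (φ' x - (K * (b - x))⁻¹) x := by
    intro x hx
    have hlog := ((hasDerivAt_id x).const_sub b).log (sub_pos.2 hx.2).ne'
    refine ((hsub hx).1.add (hlog.const_mul K⁻¹)).congr_deriv ?_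
    simp only [id, mul_inv]
    ring
  have hmono : MonotoneOn ψ (Ioo x₀ b) := by
    refine monotoneOn_of_hasDerivWithinAt_nonneg (f' := fun x => φ' x - (K * (b - x))⁻¹)
      (convex_Ioo x₀ b) (fun x hx => (hψ x hx).continuousAt.continuousWithinAt) ?_ ?_ <;>
      rw [interior_Ioo]
    · exact fun x hx => (hψ x hx).hasDerivWithinAt
    · exact fun x hx => sub_nonneg.2 (hsub hx).2
  obtain ⟨x₁, hx₀₁, hx₁b⟩ := exists_between (show x₀ < b from hx₀b)
  have hlog : Tendsto (fun x => ψ x₁ - K⁻¹ * Real.log (b - x)) (𝓝[<] b) atTop := by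
    have hb : Tendsto (fun x => b - x) (𝓝[<] b) (𝓝[>] 0) := tendsto_nhdsWithin_iff.2
      ⟨by simpa using ((continuous_sub_left b).tendsto b).mono_left nhdsWithin_le_nhds,
        eventually_nhdsWithin_of_forall fun x hx => sub_pos.2 (mem_Iio.1 hx)⟩
    simp only [sub_eq_add_neg, ← neg_mul]
    exact tendsto_atTop_add_const_left _ _
      ((Real.tendsto_log_nhdsGT_zero.comp hb).const_mul_atBot_of_neg (by simpa using hK))
  refine tendsto_atTop_mono' _ ?_ hlog
  filter_upwards [Ioo_mem_nhdsLT hx₁b] with x hx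
  have := hmono ⟨hx₀₁, hx₁b⟩ ⟨hx₀₁.trans hx.1, hx.2⟩ hx.1.le
  simp only [ψ] at this ⊢
  linarith

lemma tendsto_nhdsGT_atBot_of_inv_le_deriv {φ φ' : ℝ → ℝ} {a K : ℝ} (hK : 0 < K)
    (h : ∀ᶠ x in 𝓝[>] a, HasDerivAt φ (φ' x) x ∧ (K * (x - a))⁻¹ ≤ φ' x) :
    Tendsto φ (𝓝[>] a) atBot := by
  have hrefl : Tendsto (fun y => -φ (-y)) (𝓝[<] (-a)) atTop := by
    refine tendsto_nhdsLT_atTop_of_inv_le_deriv (φ' := fun y => φ' (-y)) hK ?_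
    filter_upwards [tendsto_neg_nhdsLT_neg.eventually h] with y ⟨hd, hle⟩
    refine ⟨?_, by simpa [sub_eq_add_neg, add_comm] using hle⟩
    exact (hd.comp y (hasDerivAt_neg y)).neg.congr_deriv (by simp)
  simpa [Function.comp_def] using
    tendsto_neg_atTop_atBot.comp (hrefl.comp tendsto_neg_nhdsGT_neg)

lemma exists_strictMono_hasDerivAt_inverse {φ φ' : ℝ → ℝ} {a b : ℝ} (hab : a < b)
    (hφ : ∀ x ∈ Ioo a b, HasDerivAt φ (φ' x) x) (hpos : ∀ x ∈ Ioo a b, 0 < φ' x)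
    (hbot : Tendsto φ (𝓝[>] a) atBot) (htop : Tendsto φ (𝓝[<] b) atTop) :
    ∃ u : ℝ → ℝ, StrictMono u ∧ (∀ ξ, u ξ ∈ Ioo a b) ∧
      (∀ ξ, HasDerivAt u (φ' (u ξ))⁻¹ ξ) ∧
      Tendsto u atBot (𝓝 a) ∧ Tendsto u atTop (𝓝 b) := by
  have hcont : ContinuousOn φ (Ioo a b) := fun x hx => (hφ x hx).continuousAt.continuousWithinAt
  have hmono : StrictMonoOn φ (Ioo a b) := by
    refine strictMonoOn_of_hasDerivWithinAt_pos (f' := φ') (convex_Ioo a b) hcont ?_ ?_ <;>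
      rw [interior_Ioo]
    · exact fun x hx => (hφ x hx).hasDerivWithinAt
    · exact hpos
  have hsurj : Function.Surjective ((Ioo a b).domRestrict φ) :=
    surjOn_iff_surjective.1 <| hcont.surjOn_of_tendsto (nonempty_Ioo.2 hab)
      ((tendsto_comp_coe_Ioo_atBot hab).2 hbot) ((tendsto_comp_coe_Ioo_atTop hab).2 htop)
  set e := StrictMono.orderIsoOfSurjective ((Ioo a b).domRestrict φ)
    (fun x y hxy => hmono x.2 y.2 hxy) hsurj
  have hinv : ∀ ξ, φ (e.symm ξ) = ξ := e.apply_symm_apply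
  have hucont : Continuous fun ξ => (e.symm ξ : ℝ) :=
    continuous_subtype_val.comp e.symm.continuous
  refine ⟨fun ξ => e.symm ξ, Subtype.strictMono_coe _ |>.comp e.symm.strictMono,
    fun ξ => (e.symm ξ).2, fun ξ => ?_, ?_, ?_⟩
  · exact HasDerivAt.of_local_left_inverse hucont.continuousAt (hφ _ (e.symm ξ).2)
      (hpos _ (e.symm ξ).2).ne' (Eventually.of_forall hinv)
  · exact ((tendsto_Ioo_atBot).1 e.symm.tendsto_atBot).mono_right nhdsWithin_le_nhds
  · exact ((tendsto_Ioo_atTop).1 e.symm.tendsto_atTop).mono_right nhdsWithin_le_nhds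

theorem exists_heteroclinic_of_pos {F : ℝ → ℝ} {a b : ℝ} (hab : a < b)
    (hF : LocallyLipschitz F) (ha : F a = 0) (hb : F b = 0) (hpos : ∀ x ∈ Ioo a b, 0 < F x) :
    ∃ u : ℝ → ℝ, ContDiff ℝ 1 u ∧ StrictMono u ∧ (∀ ξ, u ξ ∈ Ioo a b) ∧
      (∀ ξ, HasDerivAt u (F (u ξ)) ξ) ∧
      Tendsto u atBot (𝓝 a) ∧ Tendsto u atTop (𝓝 b) := by
  obtain ⟨c, hc⟩ := nonempty_Ioo.2 hab
  set φ : ℝ → ℝ := fun x => ∫ t in c..x, (F t)⁻¹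
  have hφ : ∀ x ∈ Ioo a b, HasDerivAt φ (F x)⁻¹ x := fun x =>
    hasDerivAt_integral_of_continuousOn_Ioo
      (hF.continuous.continuousOn.inv₀ fun x hx => (hpos x hx).ne') hc
  have hbot : Tendsto φ (𝓝[>] a) atBot := by
    obtain ⟨K, hK, hlip⟩ := hF.exists_pos_eventually_dist_le a
    refine tendsto_nhdsGT_atBot_of_inv_le_deriv (φ' := (F ·)⁻¹) hK ?_
    filter_upwards [Ioo_mem_nhdsGT hab, nhdsWithin_le_nhds hlip] with x hx hdist
    refine ⟨hφ x hx, inv_anti₀ (hpos x hx) ?_⟩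
    rwa [ha, Real.dist_eq, Real.dist_eq, sub_zero, abs_of_pos (hpos x hx),
      abs_of_pos (sub_pos.2 hx.1)] at hdist
  have htop : Tendsto φ (𝓝[<] b) atTop := by
    obtain ⟨K, hK, hlip⟩ := hF.exists_pos_eventually_dist_le b
    refine tendsto_nhdsLT_atTop_of_inv_le_deriv (φ' := (F ·)⁻¹) hK ?_
    filter_upwards [Ioo_mem_nhdsLT hab, nhdsWithin_le_nhds hlip] with x hx hdist
    refine ⟨hφ x hx, inv_anti₀ (hpos x hx) ?_⟩
    rwa [hb, Real.dist_eq, Real.dist_eq, sub_zero, abs_of_pos (hpos x hx), abs_sub_comm,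
      abs_of_pos (sub_pos.2 hx.2)] at hdist
  obtain ⟨u, hmono, hmem, hu, hua, hub⟩ := exists_strictMono_hasDerivAt_inverse hab hφ
    (fun x hx => inv_pos.2 (hpos x hx)) hbot htop
  simp only [inv_inv] at hu
  have hderiv : deriv u = fun ξ => F (u ξ) := funext fun ξ => (hu ξ).deriv
  refine ⟨u, contDiff_one_iff_deriv.2 ⟨fun ξ => (hu ξ).differentiableAt, ?_⟩,
    hmono, hmem, hu, hua, hub⟩
  rw [hderiv]
  exact hF.continuous.comp <| continuous_iff_continuousAt.2 fun ξ => (hu ξ).continuousAt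

/-- Existence of stationary shock profiles: a strictly monotone heteroclinic
solution of `u' = v_minus − V(u)` joining `u_minus` (at `ξ = −∞`) to `u_plus`
(at `ξ = +∞`), provided `V(u) − v_minus` has the sign of `u_minus − u_plus`
strictly between the two states. -/
theorem exists_stationary_shock_profile
    (u_minus u_plus v_minus : ℝ) (hne : u_minus ≠ u_plus)
    (V : ℝ → ℝ) (hV : LocallyLipschitz V)
    (hVm : V u_minus = v_minus) (hVp : V u_plus = v_minus)
    (hsign : ∀ u : ℝ, u ∈ Set.Ioo (min u_plus u_minus) (max u_plus u_minus) →
      (V u - v_minus) * (u_minus - u_plus) > 0) :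
    ∃ u : ℝ → ℝ, ContDiff ℝ 1 u ∧ (StrictMono u ∨ StrictAnti u) ∧
      (∀ ξ : ℝ, u ξ ∈ Set.Ioo (min u_plus u_minus) (max u_plus u_minus)) ∧
      (∀ ξ : ℝ, deriv u ξ = v_minus - V (u ξ)) ∧
      Tendsto u atBot (nhds u_minus) ∧
      Tendsto u atTop (nhds u_plus) := by
  rcases hne.lt_or_gt with h | h
  · rw [min_eq_right h.le, max_eq_left h.le] at hsign ⊢
    obtain ⟨u, hC, hmono, hmem, hu, hbot, htop⟩ :=
      exists_heteroclinic_of_pos (F := fun x => v_minus - V x) h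
        ((LocallyLipschitz.const v_minus).sub hV) (by simp [hVm]) (by simp [hVp])
        fun x hx => by nlinarith [hsign x hx]
    exact ⟨u, hC, .inl hmono, hmem, fun ξ => (hu ξ).deriv, hbot, htop⟩
  · rw [min_eq_left h.le, max_eq_right h.le] at hsign ⊢
    obtain ⟨w, hC, hmono, hmem, hw, hbot, htop⟩ :=
      exists_heteroclinic_of_pos (F := fun x => V (-x) - v_minus) (neg_lt_neg h)
        ((hV.comp LocallyLipschitz.id.neg).sub (LocallyLipschitz.const v_minus))
        (by simp [hVm]) (by simp [hVp])
        fun x hx => by nlinarith [hsign (-x) ⟨lt_neg_of_lt_neg hx.2, neg_lt.1 hx.1⟩]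
    refine ⟨fun ξ => -w ξ, hC.neg, .inr hmono.neg, fun ξ => ?_, fun ξ => ?_, ?_, ?_⟩
    · exact ⟨lt_neg_of_lt_neg (hmem ξ).2, neg_lt.1 (hmem ξ).1⟩
    · rw [(hw ξ).fun_neg.deriv]
      ring
    · simpa using hbot.neg
    · simpa using htop.neg
end

section
/- (Lemma 4.1(i), monotonicity of shock profiles.) Let w : ℝ → ℝ be locally Lipschitz, let u₋ ≠ u₊ be real numbers, set v₋ := w(u₋), v₊ := w(u₊) and s := −(v₊ − v₋)/(u₊ − u₋), and suppose u : ℝ → ℝ is a differentiable function satisfying u′(ξ) = −s·(u(ξ) − u₋) − (w(u(ξ)) − v₋) for all ξ ∈ ℝ, with u(ξ) → u₋ as ξ → −∞ and u(ξ) → u₊ as ξ → +∞. Then u′(ξ) ≠ 0 for every ξ ∈ ℝ, and consequently u is strictly monotone on ℝ. -/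
/-!
If the profile ever had `u' = 0`, then `u ξ₀` would be an equilibrium of the autonomous equation
`u' = F(u)` with `F(x) = -s (x - u₋) - (w(x) - v₋)`. Since `F` is locally Lipschitz, uniqueness of
solutions forces `u ≡ u ξ₀`, contradicting `u₋ ≠ u₊`. A derivative that never vanishes has constant
sign by Darboux's theorem, so `u` is strictly monotone.
-/

open Filter Topology Set

section Autonomous

variable {E : Type*} [NormedAddCommGroup E] [NormedSpace ℝ E] {F : E → E} {u : ℝ → E}

theorem ODE_solution_eq_const_of_equilibrium (hF : LocallyLipschitz F)
    (hu : ∀ t, HasDerivAt u (F (u t)) t) {t₀ : ℝ} (h₀ : F (u t₀) = 0) :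
    u = Function.const ℝ (u t₀) := by
  have hcont : Continuous u := continuous_iff_continuousAt.2 fun t ↦ (hu t).continuousAt
  -- near each point of the level set, `u` and the constant solution agree by local uniqueness
  have hopen : IsOpen {t | u t = u t₀} := by
    refine isOpen_iff_mem_nhds.2 fun t₁ (ht₁ : u t₁ = u t₀) ↦ ?_
    obtain ⟨K, N, hN, hK⟩ := hF (u t₀)
    have hmem : ∀ᶠ t in 𝓝 t₁, u t ∈ N := hcont.continuousAt.preimage_mem_nhds (ht₁ ▸ hN)
    exact ODE_solution_unique_of_eventually (v := fun _ ↦ F) (s := fun _ ↦ N)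
      (Eventually.of_forall fun _ ↦ hK) ((Eventually.of_forall hu).and hmem)
      (Eventually.of_forall fun t ↦ ⟨h₀ ▸ hasDerivAt_const t (u t₀), mem_of_mem_nhds hN⟩) ht₁
  have hclopen : IsClopen {t | u t = u t₀} := ⟨isClosed_eq hcont continuous_const, hopen⟩
  funext t
  exact eq_univ_iff_forall.1 (hclopen.eq_univ ⟨t₀, rfl⟩) t

theorem ODE_solution_apply_ne_zero_of_tendsto (hF : LocallyLipschitz F)
    (hu : ∀ t, HasDerivAt u (F (u t)) t) {a b : E} (hab : a ≠ b)
    (ha : Tendsto u atBot (𝓝 a)) (hb : Tendsto u atTop (𝓝 b)) (t : ℝ) : F (u t) ≠ 0 := by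
  intro h₀
  rw [ODE_solution_eq_const_of_equilibrium hF hu h₀] at ha hb
  exact hab ((tendsto_nhds_unique tendsto_const_nhds ha).symm.trans
    (tendsto_nhds_unique tendsto_const_nhds hb))

end Autonomous

theorem strictMono_or_strictAnti_of_deriv_ne_zero {f : ℝ → ℝ} (hf : Differentiable ℝ f)
    (hf' : ∀ x, deriv f x ≠ 0) : StrictMono f ∨ StrictAnti f := by
  rcases hasDerivWithinAt_forall_lt_or_forall_gt_of_forall_ne convex_univ
    (fun x _ ↦ (hf x).hasDerivAt.hasDerivWithinAt) (fun x _ ↦ hf' x) with hneg | hpos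
  · exact Or.inr (strictAnti_of_deriv_neg fun x ↦ hneg x (mem_univ x))
  · exact Or.inl (strictMono_of_deriv_pos fun x ↦ hpos x (mem_univ x))

theorem shock_profile_deriv_ne_zero_and_strictMono_general
    (w : ℝ → ℝ) (hw : LocallyLipschitz w)
    (u_minus u_plus : ℝ) (hne : u_minus ≠ u_plus)
    (v_minus s : ℝ)
    (u : ℝ → ℝ) (hdiff : Differentiable ℝ u)
    (hode : ∀ ξ : ℝ, deriv u ξ = -s * (u ξ - u_minus) - (w (u ξ) - v_minus))
    (hbot : Tendsto u atBot (nhds u_minus))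
    (htop : Tendsto u atTop (nhds u_plus)) :
    (∀ ξ : ℝ, deriv u ξ ≠ 0) ∧ (StrictMono u ∨ StrictAnti u) := by
  set F : ℝ → ℝ := fun x ↦ -s * (x - u_minus) - (w x - v_minus)
  have hF : LocallyLipschitz F :=
    (by fun_prop : ContDiff ℝ 1 fun x : ℝ ↦ -s * (x - u_minus)).locallyLipschitz.sub
      (hw.sub (LipschitzWith.const v_minus).locallyLipschitz)
  have hu : ∀ ξ, HasDerivAt u (F (u ξ)) ξ := fun ξ ↦ (hdiff ξ).hasDerivAt.congr_deriv (hode ξ)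
  have hu' : ∀ ξ, deriv u ξ ≠ 0 := fun ξ ↦
    hode ξ ▸ ODE_solution_apply_ne_zero_of_tendsto hF hu hne hbot htop ξ
  exact ⟨hu', strictMono_or_strictAnti_of_deriv_ne_zero hdiff hu'⟩

/-- Lemma 4.1(i): the derivative of a viscous shock profile never vanishes,
so the profile is strictly monotone. -/
theorem shock_profile_deriv_ne_zero_and_strictMono
    (w : ℝ → ℝ) (hw : LocallyLipschitz w)
    (u_minus u_plus : ℝ) (hne : u_minus ≠ u_plus)
    (v_minus v_plus s : ℝ)
    (hvm : v_minus = w u_minus) (hvp : v_plus = w u_plus)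
    (hs : s = -((v_plus - v_minus) / (u_plus - u_minus)))
    (u : ℝ → ℝ) (hdiff : Differentiable ℝ u)
    (hode : ∀ ξ : ℝ, deriv u ξ = -s * (u ξ - u_minus) - (w (u ξ) - v_minus))
    (hbot : Tendsto u atBot (nhds u_minus))
    (htop : Tendsto u atTop (nhds u_plus)) :
    (∀ ξ : ℝ, deriv u ξ ≠ 0) ∧ (StrictMono u ∨ StrictAnti u) :=
  shock_profile_deriv_ne_zero_and_strictMono_general w hw u_minus u_plus hne v_minus s u hdiff hode
    hbot htop
end

section
/- (Lemma 4.3, deceleration shock profile.) Let u₊ < u₋ and let v : ℝ → ℝ be continuously differentiable, strictly increasing, and strictly concave on [u₊, u₋]. Set v₋ := v(u₋), v₊ := v(u₊), and s := −(v₊ − v₋)/(u₊ − u₋). Then there exists a continuously differentiable, strictly decreasing function u : ℝ → ℝ with values in (u₊, u₋), satisfying u′(ξ) = −s·(u(ξ) − u₋) − (v(u(ξ)) − v₋) for all ξ ∈ ℝ, with u(ξ) → u₋ as ξ → −∞ and u(ξ) → u₊ as ξ → +∞. (Hence any two states on the strictly concave, strictly increasing deceleration curve v = v^D(u) with u₋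 > u₊ are connected by a shock wave with a viscous profile; no such connection exists when u₋ < u₊.) -/
/-!
The right-hand side `f w = -s (w - u₋) - (v w - v₋)` is the secant of `v` through the two states
minus `v` itself, so it vanishes at `u₊` and `u₋` and is negative in between by strict concavity.
The profile is the inverse of `F w = ∫_w^m dt / (-f t)`, which solves `u' = f(u)`. Because `v` is
`C¹`, `f` is Lipschitz and vanishes at most linearly at the endpoints, so `F` diverges
logarithmically there; hence `F` maps `(u₊, u₋)` onto `ℝ` and the profile is defined for all `ξ`.
-/

open Filter Set Topology NNReal

theorem StrictConcaveOn.secant_lt {v : ℝ → ℝ} {a b w : ℝ}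
    (hv : StrictConcaveOn ℝ (Icc a b) v) (hw : w ∈ Ioo a b) :
    (v a - v b) / (a - b) * (w - b) < v w - v b := by
  obtain ⟨haw, hwb⟩ := hw
  have hab : 0 < b - a := by linarith
  have hlt := hv.2 (left_mem_Icc.2 (haw.trans hwb).le) (right_mem_Icc.2 (haw.trans hwb).le)
    (haw.trans hwb).ne (show 0 < (b - w) / (b - a) from div_pos (by linarith) hab)
    (show 0 < (w - a) / (b - a) from div_pos (by linarith) hab) (by field_simp; ring)
  have hcomb : (b - w) / (b - a) * a + (w - a) / (b - a) * b = w := by field_simp; ring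
  simp only [smul_eq_mul, hcomb] at hlt
  have hsecant : (v a - v b) / (a - b) * (w - b)
      = (b - w) / (b - a) * v a + (w - a) / (b - a) * v b - v b := by
    field_simp [hab.ne', (show a - b ≠ 0 by linarith)]; ring
  linarith

theorem Monotone.continuous_of_isOpen_range {α β : Type*} [LinearOrder α] [TopologicalSpace α]
    [OrderTopology α] [LinearOrder β] [TopologicalSpace β] [OrderTopology β] [DenselyOrdered β]
    {f : α → β} (hf : Monotone f) (h : IsOpen (range f)) : Continuous f :=
  continuous_iff_continuousAt.2 fun x ↦ continuousAt_of_monotoneOn_of_image_mem_nhds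
    (hf.monotoneOn univ) univ_mem (by rw [image_univ]; exact h.mem_nhds (mem_range_self x))

theorem Antitone.continuous_of_isOpen_range {α β : Type*} [LinearOrder α] [TopologicalSpace α]
    [OrderTopology α] [LinearOrder β] [TopologicalSpace β] [OrderTopology β] [DenselyOrdered β]
    {f : α → β} (hf : Antitone f) (h : IsOpen (range f)) : Continuous f :=
  hf.dual_left.continuous_of_isOpen_range h

theorem contDiff_one_of_hasDerivAt_comp {u f : ℝ → ℝ} (hu : ∀ ξ, HasDerivAt u (f (u ξ)) ξ)
    (hf : ∀ ξ, ContinuousAt f (u ξ)) : ContDiff ℝ 1 u := by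
  have hdiff : Differentiable ℝ u := fun ξ ↦ (hu ξ).differentiableAt
  rw [contDiff_one_iff_deriv, funext fun ξ ↦ (hu ξ).deriv]
  exact ⟨hdiff, continuous_iff_continuousAt.2 fun ξ ↦ (hf ξ).comp hdiff.continuous.continuousAt⟩

theorem tendsto_integral_inv_nhdsGT_atTop {h : ℝ → ℝ} {a m K : ℝ} (ham : a < m)
    (hcont : ContinuousOn h (Ioc a m)) (hpos : ∀ t ∈ Ioc a m, 0 < h t)
    (hle : ∀ t ∈ Ioc a m, h t ≤ K * (t - a)) :
    Tendsto (fun w ↦ ∫ t in w..m, (h t)⁻¹) (𝓝[>] a) atTop := by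
  have hK : 0 < K := pos_of_mul_pos_left ((hpos m ⟨ham, le_rfl⟩).trans_le
    (hle m ⟨ham, le_rfl⟩)) (sub_pos.2 ham).le
  have hshift : Tendsto (fun w ↦ w - a) (𝓝[>] a) (𝓝[>] 0) := by
    simpa using (continuous_sub_right a).continuousWithinAt.tendsto_nhdsWithin
      (x := a) (s := Ioi a) (t := Ioi 0) fun w hw ↦ sub_pos.2 hw
  have hlog : Tendsto (fun w ↦ K⁻¹ * Real.log ((m - a) / (w - a))) (𝓝[>] a) atTop := by
    refine (Real.tendsto_log_atTop.comp ?_).const_mul_atTop (inv_pos.2 hK)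
    simp only [div_eq_mul_inv]
    exact (tendsto_inv_nhdsGT_zero.comp hshift).const_mul_atTop (sub_pos.2 ham)
  refine tendsto_atTop_mono' _ ?_ hlog
  filter_upwards [Ioo_mem_nhdsGT ham] with w ⟨haw, hwm⟩
  have hsub : Icc w m ⊆ Ioc a m := Icc_subset_Ioc haw le_rfl
  have hbound : ∀ t ∈ Icc w m, (K * (t - a))⁻¹ ≤ (h t)⁻¹ := fun t ht ↦
    inv_anti₀ (hpos t (hsub ht)) (hle t (hsub ht))
  calc K⁻¹ * Real.log ((m - a) / (w - a)) = ∫ t in w..m, (K * (t - a))⁻¹ := by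
        simp only [mul_inv, intervalIntegral.integral_const_mul]
        rw [intervalIntegral.integral_comp_sub_right (fun t ↦ t⁻¹),
          integral_inv_of_pos (sub_pos.2 haw) (sub_pos.2 ham)]
    _ ≤ ∫ t in w..m, (h t)⁻¹ := by
        refine intervalIntegral.integral_mono_on hwm.le ?_ ?_ hbound
        · refine ContinuousOn.intervalIntegrable_of_Icc hwm.le ?_
          exact ContinuousOn.inv₀ (by fun_prop) fun t ht ↦
            (mul_pos hK (sub_pos.2 (haw.trans_le ht.1))).ne'
        · exact (hcont.mono hsub).inv₀ (fun t ht ↦ (hpos t (hsub ht)).ne')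
            |>.intervalIntegrable_of_Icc hwm.le

theorem tendsto_integral_inv_nhdsLT_atTop {h : ℝ → ℝ} {m b K : ℝ} (hmb : m < b)
    (hcont : ContinuousOn h (Ico m b)) (hpos : ∀ t ∈ Ico m b, 0 < h t)
    (hle : ∀ t ∈ Ico m b, h t ≤ K * (b - t)) :
    Tendsto (fun w ↦ ∫ t in m..w, (h t)⁻¹) (𝓝[<] b) atTop := by
  have hrefl := tendsto_integral_inv_nhdsGT_atTop (h := fun t ↦ h (-t)) (K := K) (neg_lt_neg hmb)
    (hcont.comp continuous_neg.continuousOn fun t ht ↦ ⟨le_neg.1 ht.2, neg_lt.1 ht.1⟩)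
    (fun t ht ↦ hpos _ ⟨le_neg.1 ht.2, neg_lt.1 ht.1⟩)
    (fun t ht ↦ by simpa [sub_neg_eq_add, add_comm] using hle _ ⟨le_neg.1 ht.2, neg_lt.1 ht.1⟩)
  refine (hrefl.comp tendsto_neg_nhdsLT).congr fun w ↦ ?_
  simpa using (intervalIntegral.integral_comp_neg (a := m) (b := w) fun t ↦ (h (-t))⁻¹).symm

theorem exists_strictAnti_hasDerivAt_inverse {F F' : ℝ → ℝ} {a b : ℝ} (hab : a < b)
    (hF : ∀ w ∈ Ioo a b, HasDerivAt F (F' w) w) (hF' : ∀ w ∈ Ioo a b, F' w < 0)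
    (ha : Tendsto F (𝓝[>] a) atTop) (hb : Tendsto F (𝓝[<] b) atBot) :
    ∃ u : ℝ → ℝ, StrictAnti u ∧ range u = Ioo a b ∧ ∀ ξ, HasDerivAt u (F' (u ξ))⁻¹ ξ := by
  have hcont : ContinuousOn F (Ioo a b) := fun w hw ↦ (hF w hw).continuousAt.continuousWithinAt
  have hanti : StrictAntiOn F (Ioo a b) :=
    strictAntiOn_of_hasDerivWithinAt_neg (convex_Ioo a b) hcont
      (fun w hw ↦ (hF w (interior_subset hw)).hasDerivWithinAt)
      (fun w hw ↦ hF' w (interior_subset hw))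
  have hsurj : SurjOn F (Ioo a b) univ := hcont.surjOn_of_tendsto' (nonempty_Ioo.2 hab)
    ((tendsto_comp_coe_Ioo_atBot hab).2 ha) ((tendsto_comp_coe_Ioo_atTop hab).2 hb)
  choose u hu hFu using fun ξ ↦ hsurj (mem_univ ξ)
  have hu_anti : StrictAnti u := fun ξ η hξη ↦
    (hanti.lt_iff_gt (hu ξ) (hu η)).1 (by rwa [hFu, hFu])
  have hrange : range u = Ioo a b := by
    refine (range_subset_iff.2 hu).antisymm fun w hw ↦ ⟨F w, ?_⟩
    exact hanti.injOn (hu (F w)) hw (hFu (F w))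
  have hu_cont : Continuous u :=
    hu_anti.antitone.continuous_of_isOpen_range (hrange ▸ isOpen_Ioo)
  refine ⟨u, hu_anti, hrange, fun ξ ↦ ?_⟩
  exact (hF _ (hu ξ)).of_local_left_inverse hu_cont.continuousAt (hF' _ (hu ξ)).ne
    (Eventually.of_forall hFu)

theorem exists_strictAnti_hasDerivAt_of_lipschitzOnWith {f : ℝ → ℝ} {a b : ℝ} {K : ℝ≥0}
    (hab : a < b) (hf : LipschitzOnWith K f (Icc a b)) (ha : f a = 0) (hb : f b = 0)
    (hneg : ∀ w ∈ Ioo a b, f w < 0) :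
    ∃ u : ℝ → ℝ, StrictAnti u ∧ range u = Ioo a b ∧ ∀ ξ, HasDerivAt u (f (u ξ)) ξ := by
  obtain ⟨m, ham, hmb⟩ := exists_between hab
  have hcont_neg : ContinuousOn (fun t ↦ -f t) (Icc a b) := hf.continuousOn.neg
  have hcont : ContinuousOn (fun t ↦ (-f t)⁻¹) (Ioo a b) :=
    (hcont_neg.mono Ioo_subset_Icc_self).inv₀ fun t ht ↦ (neg_pos.2 (hneg t ht)).ne'
  have hdist : ∀ t ∈ Icc a b, ∀ c ∈ Icc a b, f c = 0 → -f t ≤ K * |t - c| := by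
    intro t ht c hc hfc
    have := hf.dist_le_mul t ht c hc
    rw [Real.dist_eq, Real.dist_eq, hfc, sub_zero] at this
    exact (neg_le_abs (f t)).trans this
  have hF : ∀ w ∈ Ioo a b, HasDerivAt (fun w ↦ ∫ t in w..m, (-f t)⁻¹) ((f w)⁻¹) w := by
    intro w hw
    have hsub : uIcc w m ⊆ Ioo a b := ordConnected_Ioo.uIcc_subset hw ⟨ham, hmb⟩
    simpa [inv_neg] using intervalIntegral.integral_hasDerivAt_left
      ((hcont.mono hsub).intervalIntegrable) (hcont.stronglyMeasurableAtFilter isOpen_Ioo w hw)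
      (hcont.continuousAt (isOpen_Ioo.mem_nhds hw))
  have hFa : Tendsto (fun w ↦ ∫ t in w..m, (-f t)⁻¹) (𝓝[>] a) atTop := by
    refine tendsto_integral_inv_nhdsGT_atTop (K := K) ham
      (hcont_neg.mono fun t ht ↦ ⟨ht.1.le, ht.2.trans hmb.le⟩)
      (fun t ht ↦ neg_pos.2 (hneg t ⟨ht.1, ht.2.trans_lt hmb⟩)) fun t ht ↦ ?_
    simpa [abs_of_pos (sub_pos.2 ht.1)] using
      hdist t ⟨ht.1.le, ht.2.trans hmb.le⟩ a (left_mem_Icc.2 hab.le) ha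
  have hFb : Tendsto (fun w ↦ ∫ t in w..m, (-f t)⁻¹) (𝓝[<] b) atBot := by
    simp_rw [intervalIntegral.integral_symm m]
    refine tendsto_neg_atTop_atBot.comp (tendsto_integral_inv_nhdsLT_atTop (K := K) hmb
      (hcont_neg.mono fun t ht ↦ ⟨ham.le.trans ht.1, ht.2.le⟩)
      (fun t ht ↦ neg_pos.2 (hneg t ⟨ham.trans_le ht.1, ht.2⟩)) fun t ht ↦ ?_)
    simpa [abs_of_neg (sub_neg.2 ht.2)] using
      hdist t ⟨ham.le.trans ht.1, ht.2.le⟩ b (right_mem_Icc.2 hab.le) hb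
  simpa using exists_strictAnti_hasDerivAt_inverse hab hF (fun w hw ↦ inv_lt_zero.2 (hneg w hw))
    hFa hFb

theorem exists_deceleration_shock_profile_general
    (u_plus u_minus : ℝ) (hlt : u_plus < u_minus)
    (v : ℝ → ℝ)
    (hC1 : ContDiffOn ℝ 1 v (Set.Icc u_plus u_minus))
    (hconc : StrictConcaveOn ℝ (Set.Icc u_plus u_minus) v)
    (v_minus v_plus s : ℝ)
    (hvm : v_minus = v u_minus) (hvp : v_plus = v u_plus)
    (hs : s = -((v_plus - v_minus) / (u_plus - u_minus))) :
    ∃ u : ℝ → ℝ, ContDiff ℝ 1 u ∧ StrictAnti u ∧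
      (∀ ξ : ℝ, u ξ ∈ Set.Ioo u_plus u_minus) ∧
      (∀ ξ : ℝ, deriv u ξ = -s * (u ξ - u_minus) - (v (u ξ) - v_minus)) ∧
      Tendsto u atBot (nhds u_minus) ∧
      Tendsto u atTop (nhds u_plus) := by
  subst hvm hvp
  set f : ℝ → ℝ := fun w ↦ -s * (w - u_minus) - (v w - v u_minus) with hf
  have hf_plus : f u_plus = 0 := by
    simp only [hf, hs]
    field_simp [sub_ne_zero.2 hlt.ne]
    ring
  have hf_minus : f u_minus = 0 := by simp [hf]
  have hf_neg : ∀ w ∈ Ioo u_plus u_minus, f w < 0 := fun w hw ↦ by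
    simpa [hf, hs] using hconc.secant_lt hw
  have hf_C1 : ContDiffOn ℝ 1 f (Icc u_plus u_minus) := by fun_prop
  obtain ⟨K, hK⟩ :=
    hf_C1.exists_lipschitzOnWith one_ne_zero (convex_Icc _ _) isCompact_Icc
  obtain ⟨u, hu_anti, hu_range, hu_deriv⟩ :=
    exists_strictAnti_hasDerivAt_of_lipschitzOnWith hlt hK hf_plus hf_minus hf_neg
  have hu_mem : ∀ ξ, u ξ ∈ Ioo u_plus u_minus := fun ξ ↦ hu_range ▸ mem_range_self ξ
  refine ⟨u, contDiff_one_of_hasDerivAt_comp hu_deriv fun ξ ↦ ?_, hu_anti, hu_mem,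
    fun ξ ↦ (hu_deriv ξ).deriv, tendsto_atBot_isLUB hu_anti.antitone (hu_range ▸ isLUB_Ioo hlt),
    tendsto_atTop_isGLB hu_anti.antitone (hu_range ▸ isGLB_Ioo hlt)⟩
  exact hK.continuousOn.continuousAt (Icc_mem_nhds (hu_mem ξ).1 (hu_mem ξ).2)

/-- Lemma 4.3: deceleration shock profile. For a continuously differentiable,
strictly increasing, strictly concave flux `v` on `[u_plus, u_minus]` with
`u_plus < u_minus`, there is a strictly decreasing viscous profile joining
`u_minus` (at `ξ = −∞`) to `u_plus` (at `ξ = +∞`) for the traveling-wave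
equation `u' = −s(u − u_minus) − (v(u) − v_minus)`, where
`s = −(v_plus − v_minus)/(u_plus − u_minus)` is the Rankine–Hugoniot speed. -/
theorem exists_deceleration_shock_profile
    (u_plus u_minus : ℝ) (hlt : u_plus < u_minus)
    (v : ℝ → ℝ)
    (hC1 : ContDiffOn ℝ 1 v (Set.Icc u_plus u_minus))
    (hmono : StrictMonoOn v (Set.Icc u_plus u_minus))
    (hconc : StrictConcaveOn ℝ (Set.Icc u_plus u_minus) v)
    (v_minus v_plus s : ℝ)
    (hvm : v_minus = v u_minus) (hvp : v_plus = v u_plus)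
    (hs : s = -((v_plus - v_minus) / (u_plus - u_minus))) :
    ∃ u : ℝ → ℝ, ContDiff ℝ 1 u ∧ StrictAnti u ∧
      (∀ ξ : ℝ, u ξ ∈ Set.Ioo u_plus u_minus) ∧
      (∀ ξ : ℝ, deriv u ξ = -s * (u ξ - u_minus) - (v (u ξ) - v_minus)) ∧
      Tendsto u atBot (nhds u_minus) ∧
      Tendsto u atTop (nhds u_plus) :=
  exists_deceleration_shock_profile_general u_plus u_minus hlt v hC1 hconc v_minus v_plus s hvm hvp
    hs
end
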